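/- Let d, b ≥ 1, let x ∈ ℝ^d, and consider a Count Sketch row of x: a uniformly random hash h : {1,…,d} → {1,…,b} and uniformly random signs s : {1,…,d} → {−1,+1}, with all 2d random variables mutually independent; the row is C ∈ ℝ^b with C(y) = Σ_{j : h(j)=y} s(j)·x_j, and the point estimate of coordinate i is x̂_i = s(i)·C(h(i)). Then for every coordinate i, E[(x̂_i − x_i)²] = (1/b)·Σ_{j ≠ i} x_j² ≤ ‖x‖₂²/b. -/
import Mathlib

open Finset

/-- The real-valued sign `±1` associated to a boolean. -/
def csSign (s : Bool) : ℝ := if s then 1 else -1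

/-- A Count Sketch row: bucket `y` stores `∑_{j : h j = y} s j • x j`. -/
noncomputable def csRow {d b : ℕ} (x : EuclideanSpace ℝ (Fin d))
    (h : Fin d → Fin b) (s : Fin d → Bool) (y : Fin b) : ℝ :=
  ∑ j ∈ Finset.univ.filter (fun j => h j = y), csSign (s j) * x j

/-- The Count Sketch row point estimate of coordinate `i`: `s i • C (h i)`. -/
noncomputable def csEstimate {d b : ℕ} (x : EuclideanSpace ℝ (Fin d))
    (h : Fin d → Fin b) (s : Fin d → Bool) (i : Fin d) : ℝ :=
  csSign (s i) * csRow x h s (h i)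

lemma csSign_mul_self (t : Bool) : csSign t * csSign t = 1 := by
  cases t <;> norm_num [csSign]

lemma sum_csSign_mul_ne {d : ℕ} {j k : Fin d} (hjk : j ≠ k) :
    ∑ s : Fin d → Bool, csSign (s j) * csSign (s k) = 0 := by
  apply Finset.sum_involution (fun s _ => Function.update s j (!s j))
  · intro s _
    rw [Function.update_self, Function.update_of_ne (Ne.symm hjk)]
    cases s j <;> cases s k <;> norm_num [csSign]
  · intro s _ _
    intro hcontra
    have := congrFun hcontra j
    simp at this
  · intro s _
    funext a
    by_cases ha : a = j
    · subst ha; simp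
    · simp [Function.update_of_ne ha]
  · intro s _; exact Finset.mem_univ _

lemma sum_hash_indicator {d b : ℕ} {j i : Fin d} (hji : j ≠ i) :
    ∑ h : Fin d → Fin b, (if h j = h i then (1:ℝ) else 0) = (b:ℝ) ^ (d - 1) := by
  rw [← Equiv.sum_comp (Equiv.funSplitAt j (Fin b)).symm
      (fun h => if h j = h i then (1:ℝ) else 0)]
  rw [Fintype.sum_prod_type]
  have key : ∀ (v : Fin b) (g : {k : Fin d // k ≠ j} → Fin b),
      ((Equiv.funSplitAt j (Fin b)).symm (v, g)) j = v ∧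
      ((Equiv.funSplitAt j (Fin b)).symm (v, g)) i = g ⟨i, Ne.symm hji⟩ := by
    intro v g
    constructor <;> simp [Equiv.funSplitAt, Equiv.piSplitAt, Ne.symm hji]
  calc ∑ v : Fin b, ∑ g : {k : Fin d // k ≠ j} → Fin b,
        (if ((Equiv.funSplitAt j (Fin b)).symm (v, g)) j
            = ((Equiv.funSplitAt j (Fin b)).symm (v, g)) i then (1:ℝ) else 0)
      = ∑ v : Fin b, ∑ g : {k : Fin d // k ≠ j} → Fin b,
        (if v = g ⟨i, Ne.symm hji⟩ then (1:ℝ) else 0) := by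
        refine Finset.sum_congr rfl fun v _ => Finset.sum_congr rfl fun g _ => ?_
        rw [(key v g).1, (key v g).2]
    _ = ∑ g : {k : Fin d // k ≠ j} → Fin b, ∑ v : Fin b,
        (if v = g ⟨i, Ne.symm hji⟩ then (1:ℝ) else 0) := Finset.sum_comm
    _ = ∑ g : {k : Fin d // k ≠ j} → Fin b, (1:ℝ) := by
        refine Finset.sum_congr rfl fun g _ => ?_
        simp
    _ = (b:ℝ) ^ (d - 1) := by
        rw [Finset.sum_const, Finset.card_univ]
        simp [Fintype.card_fun]

lemma csErr {d b : ℕ} (x : EuclideanSpace ℝ (Fin d))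
    (h : Fin d → Fin b) (s : Fin d → Bool) (i : Fin d) :
    csEstimate x h s i - x i =
      csSign (s i) *
        ∑ j ∈ (Finset.univ.erase i).filter (fun j => h j = h i),
          csSign (s j) * x j := by
  unfold csEstimate csRow
  have hi_mem : i ∈ Finset.univ.filter (fun j => h j = h i) := by simp
  rw [← Finset.insert_erase hi_mem,
    Finset.sum_insert (Finset.notMem_erase _ _)]
  have hset : (Finset.univ.filter (fun j => h j = h i)).erase i
      = (Finset.univ.erase i).filter (fun j => h j = h i) := by
    ext a; simp [and_comm, Finset.mem_erase, Finset.mem_filter]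
  rw [hset, mul_add, ← mul_assoc, csSign_mul_self, one_mul,
    add_sub_cancel_left]

/-- Variance of the Count Sketch point estimate: averaging over a uniformly
random hash `h` and uniformly random signs `s`, all mutually independent,
`E[(x̂ i - x i)²] = (1/b) ∑_{j ≠ i} x j ² ≤ ‖x‖₂² / b`. -/
theorem countSketch_estimate_variance (d b : ℕ) (hd : 1 ≤ d) (hb : 1 ≤ b)
    (x : EuclideanSpace ℝ (Fin d)) (i : Fin d) :
    (∑ h : Fin d → Fin b, ∑ s : Fin d → Bool, (csEstimate x h s i - x i) ^ 2) /
        (((b : ℝ) ^ d) * 2 ^ d)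
      = (1 / b) * ∑ j ∈ Finset.univ.erase i, x j ^ 2 ∧
    (1 / (b : ℝ)) * ∑ j ∈ Finset.univ.erase i, x j ^ 2 ≤ ‖x‖ ^ 2 / b := by
  have hbR : (0:ℝ) < b := by exact_mod_cast hb
  constructor
  · -- inner sum over signs, for each fixed hash
    have inner : ∀ h : Fin d → Fin b,
        ∑ s : Fin d → Bool, (csEstimate x h s i - x i) ^ 2
          = 2 ^ d * ∑ j ∈ (Finset.univ.erase i).filter (fun j => h j = h i),
              x j ^ 2 := by
      intro h
      set T := (Finset.univ.erase i).filter (fun j => h j = h i) with hT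
      calc ∑ s : Fin d → Bool, (csEstimate x h s i - x i) ^ 2
          = ∑ s : Fin d → Bool, (∑ j ∈ T, csSign (s j) * x j) ^ 2 := by
            refine Finset.sum_congr rfl fun s _ => ?_
            rw [csErr, mul_pow, sq (csSign (s i)), csSign_mul_self, one_mul]
        _ = ∑ s : Fin d → Bool, ∑ j ∈ T, ∑ k ∈ T,
              (x j * x k) * (csSign (s j) * csSign (s k)) := by
            refine Finset.sum_congr rfl fun s _ => ?_
            rw [sq, Finset.sum_mul_sum]
            exact Finset.sum_congr rfl fun j _ => Finset.sum_congr rfl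
              fun k _ => by ring
        _ = ∑ j ∈ T, ∑ k ∈ T,
              (x j * x k) * ∑ s : Fin d → Bool, csSign (s j) * csSign (s k) := by
            rw [Finset.sum_comm]
            refine Finset.sum_congr rfl fun j _ => ?_
            rw [Finset.sum_comm]
            exact Finset.sum_congr rfl fun k _ => (Finset.mul_sum _ _ _).symm
        _ = ∑ j ∈ T, x j ^ 2 * 2 ^ d := by
            refine Finset.sum_congr rfl fun j hj => ?_
            rw [Finset.sum_eq_single_of_mem j hj]
            · rw [show ∑ s : Fin d → Bool, csSign (s j) * csSign (s j) = 2 ^ d by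
                simp [csSign_mul_self], sq]
            · intro k _ hk
              rw [sum_csSign_mul_ne (Ne.symm hk), mul_zero]
        _ = 2 ^ d * ∑ j ∈ T, x j ^ 2 := by rw [← Finset.sum_mul, mul_comm]
    have houter :
        (∑ h : Fin d → Fin b, ∑ s : Fin d → Bool, (csEstimate x h s i - x i) ^ 2)
          = 2 ^ d * ((b:ℝ) ^ (d-1) * ∑ j ∈ Finset.univ.erase i, x j ^ 2) := by
      calc (∑ h : Fin d → Fin b, ∑ s : Fin d → Bool,
              (csEstimate x h s i - x i) ^ 2)
          = ∑ h : Fin d → Fin b,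
              2 ^ d * ∑ j ∈ (Finset.univ.erase i).filter (fun j => h j = h i),
                x j ^ 2 := Finset.sum_congr rfl fun h _ => inner h
        _ = 2 ^ d * ∑ h : Fin d → Fin b,
              ∑ j ∈ Finset.univ.erase i, (if h j = h i then x j ^ 2 else 0) := by
            rw [← Finset.mul_sum]
            refine congrArg _ (Finset.sum_congr rfl fun h _ => ?_)
            rw [Finset.sum_filter]
        _ = 2 ^ d * ∑ j ∈ Finset.univ.erase i,
              x j ^ 2 * ∑ h : Fin d → Fin b, (if h j = h i then (1:ℝ) else 0) := by
            rw [Finset.sum_comm]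
            refine congrArg _ (Finset.sum_congr rfl fun j _ => ?_)
            rw [Finset.mul_sum]
            exact Finset.sum_congr rfl fun h _ => by
              simp [mul_ite]
        _ = 2 ^ d * ((b:ℝ) ^ (d-1) * ∑ j ∈ Finset.univ.erase i, x j ^ 2) := by
            rw [Finset.mul_sum, Finset.mul_sum, Finset.mul_sum]
            refine Finset.sum_congr rfl fun j hj => ?_
            rw [sum_hash_indicator (Finset.ne_of_mem_erase hj)]
            ring
    rw [houter]
    have hbd : (b:ℝ) ^ d = (b:ℝ) ^ (d-1) * b := by
      rw [← pow_succ, Nat.sub_add_cancel hd]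
    rw [hbd]
    have h2 : (2:ℝ) ^ d ≠ 0 := by positivity
    have hb1 : (b:ℝ) ^ (d-1) ≠ 0 := by positivity
    field_simp
  · have hnorm : ‖x‖ ^ 2 = ∑ j, x j ^ 2 := by
      rw [EuclideanSpace.norm_eq, Real.sq_sqrt (by positivity)]
      exact Finset.sum_congr rfl fun j _ => by rw [Real.norm_eq_abs, sq_abs]
    rw [hnorm]
    have hsub : ∑ j ∈ Finset.univ.erase i, x j ^ 2 ≤ ∑ j, x j ^ 2 :=
      Finset.sum_le_sum_of_subset_of_nonneg (Finset.erase_subset _ _)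
        (fun j _ _ => sq_nonneg _)
    calc (1/(b:ℝ)) * ∑ j ∈ Finset.univ.erase i, x j ^ 2
        = (∑ j ∈ Finset.univ.erase i, x j ^ 2) / b := by ring
      _ ≤ (∑ j, x j ^ 2) / b := by gcongr
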